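/- Let G = (V, E) be a finite simple graph with m ≥ 1 edges in which every vertex has degree at most Δ ≥ 1, and consider a uniformly random partition V = V₁ ⊎ V₂ (each vertex placed independently in V₁ or V₂ with probability 1/2 each). Then with probability at least 1/4, the partition simultaneously satisfies |E[V₁, V₂]| ≤ m/2 + √m and Σ_{v ∈ V₁} deg_G(v) ≤ m + 2·√(m·Δ) and Σ_{v ∈ V₂} deg_G(v) ≤ m + 2·√(m·Δ). -/
import Mathlib


open Finset
open scoped Classical

/-- The number of edges of `G` with one endpoint in `S` and the other outside `S`. -/
noncomputable def cutCard {V : Type*} [Fintype V] (G : SimpleGraph V) (S : Finset V) : ℕ :=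
  (G.edgeFinset.filter fun e => (∃ u ∈ e, u ∈ S) ∧ ∃ v ∈ e, v ∉ S).card

/-- The cut size of the partition `V = V₁ ⊎ V₂` determined by `f : V → Bool`. -/
noncomputable def cutOf {V : Type*} [Fintype V] (G : SimpleGraph V) (f : V → Bool) : ℕ :=
  cutCard G (Finset.univ.filter fun v => f v = true)

/-- The total degree of the part `V₁ = {v | f v = true}` of the partition determined by `f`. -/
noncomputable def degSum {V : Type*} [Fintype V] (G : SimpleGraph V) (f : V → Bool) : ℕ :=
  ∑ v ∈ Finset.univ.filter (fun v => f v = true), G.degree v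

/-- The total degree of the part `V₂ = {v | f v = false}` of the partition determined by `f`. -/
noncomputable def degSum' {V : Type*} [Fintype V] (G : SimpleGraph V) (f : V → Bool) : ℕ :=
  ∑ v ∈ Finset.univ.filter (fun v => f v = false), G.degree v

section Aux
variable {V : Type*} [Fintype V]

noncomputable def eps (f : V → Bool) (v : V) : ℝ := if f v then 1/2 else -(1/2)

lemma eps_sq (f : V → Bool) (v : V) : eps f v * eps f v = 1/4 := by
  unfold eps; by_cases h : f v <;> simp [h] <;> norm_num

lemma eps_update_same (f : V → Bool) (v : V) :
    eps (Function.update f v (!f v)) v = - eps f v := by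
  unfold eps; by_cases h : f v <;> simp [h]

lemma eps_update_other (f : V → Bool) (v w : V) (b : Bool) (h : w ≠ v) :
    eps (Function.update f v b) w = eps f w := by
  unfold eps; rw [Function.update_of_ne h]

lemma sum_flip_zero (v : V) (g : (V → Bool) → ℝ)
    (h : ∀ f, g (Function.update f v (!f v)) = - g f) :
    ∑ f : V → Bool, g f = 0 := by
  exact Finset.sum_involution (fun f _ => Function.update f v (!f v))
    (fun f _ => by rw [h]; ring)
    (fun f _ _ heq => by have h2 := congrFun heq v; simp at h2)
    (fun f _ => Finset.mem_univ _)
    (fun f _ => by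
      funext w
      by_cases hw : w = v
      · subst hw; simp
      · simp [Function.update_of_ne hw])

lemma sum_eps_mul (x : V) (h : (V → Bool) → ℝ)
    (hh : ∀ f b, h (Function.update f x b) = h f) :
    ∑ f : V → Bool, eps f x * h f = 0 := by
  apply sum_flip_zero x
  intro f
  rw [eps_update_same, hh]; ring

lemma sum_eps_pair (v w : V) (h : v ≠ w) :
    ∑ f : V → Bool, eps f v * eps f w = 0 :=
  sum_eps_mul v _ (fun f b => eps_update_other f v w b h.symm)

lemma sum_eps4 (x a b c : V) (ha : a ≠ x) (hb : b ≠ x) (hc : c ≠ x) :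
    ∑ f : V → Bool, eps f x * (eps f a * (eps f b * eps f c)) = 0 :=
  sum_eps_mul x _ (fun f bb => by
    rw [eps_update_other f x a bb ha, eps_update_other f x b bb hb,
      eps_update_other f x c bb hc])

end Aux

section Graph
variable {V : Type*} [Fintype V] (G : SimpleGraph V)

noncomputable def epair (f : V → Bool) (e : Sym2 V) : ℝ :=
  Sym2.lift ⟨fun u v => eps f u * eps f v, fun _ _ => mul_comm _ _⟩ e

@[simp] lemma epair_mk (f : V → Bool) (u v : V) :
    epair f s(u, v) = eps f u * eps f v := rfl

noncomputable def cutInd (f : V → Bool) (e : Sym2 V) : ℝ :=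
  Sym2.lift ⟨fun u v => if f u = f v then 0 else 1, fun a b => by
    by_cases h : f a = f b <;> simp [h, eq_comm]⟩ e

@[simp] lemma cutInd_mk (f : V → Bool) (u v : V) :
    cutInd f s(u, v) = if f u = f v then 0 else 1 := rfl

lemma cutInd_eq (f : V → Bool) (e : Sym2 V) :
    cutInd f e = 1 / 2 - 2 * epair f e := by
  induction e using Sym2.inductionOn with
  | _ u v =>
    simp only [cutInd_mk, epair_mk]
    unfold eps
    cases hu : f u <;> cases hv : f v <;> norm_num [hu, hv]

lemma cutOf_eq_sum (f : V → Bool) :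
    (cutOf G f : ℝ) = ∑ e ∈ G.edgeFinset, cutInd f e := by
  unfold cutOf cutCard
  rw [Finset.card_filter, Nat.cast_sum]
  apply Finset.sum_congr rfl
  intro e he
  induction e using Sym2.inductionOn with
  | _ u v =>
    simp only [Sym2.mem_iff, cutInd_mk, Finset.mem_filter, Finset.mem_univ, true_and]
    cases hu : f u <;> cases hv : f v <;>
      simp [hu, hv]

lemma sum_epair_mul_epair (e e' : Sym2 V) (he : e ∈ G.edgeFinset)
    (he' : e' ∈ G.edgeFinset) (hne : e ≠ e') :
    ∑ f : V → Bool, epair f e * epair f e' = 0 := by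
  induction e using Sym2.inductionOn with
  | _ u v =>
    induction e' using Sym2.inductionOn with
    | _ u' v' =>
      rw [SimpleGraph.mem_edgeFinset, SimpleGraph.mem_edgeSet] at he he'
      have huv : u ≠ v := he.ne
      have huv' : u' ≠ v' := he'.ne
      simp only [ne_eq, Sym2.eq_iff] at hne
      push_neg at hne
      by_cases h1 : u ≠ u' ∧ u ≠ v'
      · have : ∀ f : V → Bool,
            epair f s(u, v) * epair f s(u', v')
              = eps f u * (eps f v * (eps f u' * eps f v')) := by
          intro f; simp only [epair_mk]; ring
        rw [Finset.sum_congr rfl fun f _ => this f]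
        exact sum_eps4 u v u' v' huv.symm (Ne.symm h1.1) (Ne.symm h1.2)
      · push_neg at h1
        have hv1 : v ≠ u' ∧ v ≠ v' := by
          constructor
          · intro hvu'
            by_cases h2 : u = u'
            · exact huv (h2.trans hvu'.symm)
            · have h3 := h1 h2
              exact (hne.2 h3 hvu').elim
          · intro hvv'
            by_cases h2 : u = u'
            · exact (hne.1 h2 hvv').elim
            · have h3 := h1 h2
              exact huv (h3.trans hvv'.symm)
        have : ∀ f : V → Bool,
            epair f s(u, v) * epair f s(u', v')
              = eps f v * (eps f u * (eps f u' * eps f v')) := by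
          intro f; simp only [epair_mk]; ring
        rw [Finset.sum_congr rfl fun f _ => this f]
        exact sum_eps4 v u u' v' huv (Ne.symm hv1.1) (Ne.symm hv1.2)

lemma sum_epair_sq (e : Sym2 V) :
    ∑ f : V → Bool, epair f e * epair f e
      = (Fintype.card (V → Bool) : ℝ) / 16 := by
  induction e using Sym2.inductionOn with
  | _ u v =>
    have : ∀ f : V → Bool, epair f s(u, v) * epair f s(u, v) = 1 / 16 := by
      intro f
      simp only [epair_mk]
      have h1 := eps_sq f u
      have h2 := eps_sq f v
      nlinarith [h1, h2]
    rw [Finset.sum_congr rfl fun f _ => this f]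
    rw [Finset.sum_const, Finset.card_univ, nsmul_eq_mul]
    ring

end Graph

section Moments
variable {V : Type*} [Fintype V] (G : SimpleGraph V)

lemma cut_centered (f : V → Bool) :
    (cutOf G f : ℝ) - (G.edgeFinset.card : ℝ) / 2
      = -2 * ∑ e ∈ G.edgeFinset, epair f e := by
  rw [cutOf_eq_sum]
  have : ∀ e ∈ G.edgeFinset, cutInd f e = 1 / 2 - 2 * epair f e :=
    fun e _ => cutInd_eq f e
  rw [Finset.sum_congr rfl this, Finset.sum_sub_distrib, Finset.sum_const,
    nsmul_eq_mul, ← Finset.mul_sum]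
  ring

lemma cut_second_moment :
    ∑ f : V → Bool, ((cutOf G f : ℝ) - (G.edgeFinset.card : ℝ) / 2) ^ 2
      = (Fintype.card (V → Bool) : ℝ) * (G.edgeFinset.card : ℝ) / 4 := by
  have h1 : ∀ f : V → Bool,
      ((cutOf G f : ℝ) - (G.edgeFinset.card : ℝ) / 2) ^ 2
        = 4 * ∑ e ∈ G.edgeFinset, ∑ e' ∈ G.edgeFinset, epair f e * epair f e' := by
    intro f
    rw [cut_centered, ← Finset.sum_mul_sum]
    ring
  rw [Finset.sum_congr rfl fun f _ => h1 f, ← Finset.mul_sum, Finset.sum_comm]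
  have h2 : ∀ e ∈ G.edgeFinset,
      ∑ f : V → Bool, ∑ e' ∈ G.edgeFinset, epair f e * epair f e'
        = (Fintype.card (V → Bool) : ℝ) / 16 := by
    intro e he
    rw [Finset.sum_comm]
    rw [Finset.sum_eq_single e
      (fun e' he' hne => sum_epair_mul_epair G e e' he he' (Ne.symm hne))
      (fun h => absurd he h)]
    exact sum_epair_sq e
  rw [Finset.sum_congr rfl h2, Finset.sum_const, nsmul_eq_mul]
  ring

lemma degSum_centered (f : V → Bool) :
    (degSum G f : ℝ) - (G.edgeFinset.card : ℝ)
      = ∑ v : V, (G.degree v : ℝ) * eps f v := by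
  have hhs : ∑ v : V, (G.degree v : ℝ) = 2 * (G.edgeFinset.card : ℝ) := by
    have := G.sum_degrees_eq_twice_card_edges
    exact_mod_cast congrArg (Nat.cast : ℕ → ℝ) this
  have h1 : (degSum G f : ℝ) = ∑ v : V, (G.degree v : ℝ) * (1 / 2 + eps f v) := by
    have h2 : ∀ v : V, (G.degree v : ℝ) * (1 / 2 + eps f v)
        = if f v = true then (G.degree v : ℝ) else 0 := by
      intro v
      unfold eps
      cases hv : f v <;> simp [hv] <;> ring
    rw [Finset.sum_congr rfl fun v _ => h2 v, ← Finset.sum_filter]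
    unfold degSum
    push_cast
    rfl
  rw [h1]
  have : ∀ v : V, (G.degree v : ℝ) * (1 / 2 + eps f v)
      = (G.degree v : ℝ) / 2 + (G.degree v : ℝ) * eps f v := by intro v; ring
  rw [Finset.sum_congr rfl fun v _ => this v, Finset.sum_add_distrib]
  have : ∑ v : V, (G.degree v : ℝ) / 2 = (G.edgeFinset.card : ℝ) := by
    rw [← Finset.sum_div, hhs]; ring
  rw [this]; ring

lemma deg_second_moment :
    ∑ f : V → Bool, ((degSum G f : ℝ) - (G.edgeFinset.card : ℝ)) ^ 2
      = (Fintype.card (V → Bool) : ℝ) / 4 * ∑ v : V, (G.degree v : ℝ) ^ 2 := by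
  have h1 : ∀ f : V → Bool,
      ((degSum G f : ℝ) - (G.edgeFinset.card : ℝ)) ^ 2
        = ∑ v : V, ∑ w : V,
            ((G.degree v : ℝ) * eps f v) * ((G.degree w : ℝ) * eps f w) := by
    intro f
    rw [degSum_centered, sq, Finset.sum_mul_sum]
  rw [Finset.sum_congr rfl fun f _ => h1 f, Finset.sum_comm]
  have h2 : ∀ v : V,
      ∑ f : V → Bool, ∑ w : V,
          ((G.degree v : ℝ) * eps f v) * ((G.degree w : ℝ) * eps f w)
        = (Fintype.card (V → Bool) : ℝ) / 4 * (G.degree v : ℝ) ^ 2 := by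
    intro v
    rw [Finset.sum_comm]
    rw [Finset.sum_eq_single v]
    · have h3 : ∀ f : V → Bool,
          ((G.degree v : ℝ) * eps f v) * ((G.degree v : ℝ) * eps f v)
            = (G.degree v : ℝ) ^ 2 * (1 / 4) := by
        intro f
        calc ((G.degree v : ℝ) * eps f v) * ((G.degree v : ℝ) * eps f v)
            = (G.degree v : ℝ) ^ 2 * (eps f v * eps f v) := by ring
          _ = (G.degree v : ℝ) ^ 2 * (1 / 4) := by rw [eps_sq]
      rw [Finset.sum_congr rfl fun f _ => h3 f, Finset.sum_const,
        Finset.card_univ, nsmul_eq_mul]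
      ring
    · intro w _ hwv
      have h4 : ∀ f : V → Bool,
          ((G.degree v : ℝ) * eps f v) * ((G.degree w : ℝ) * eps f w)
            = ((G.degree v : ℝ) * (G.degree w : ℝ)) * (eps f v * eps f w) := by
        intro f; ring
      rw [Finset.sum_congr rfl fun f _ => h4 f, ← Finset.mul_sum,
        sum_eps_pair v w (Ne.symm hwv), mul_zero]
    · intro h; exact absurd (Finset.mem_univ v) h
  rw [Finset.sum_congr rfl fun v _ => h2 v, ← Finset.mul_sum]

end Moments

lemma card_filter_sq_le {V : Type*} [Fintype V] (X : (V → Bool) → ℝ) (t : ℝ)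
    (ht : 0 ≤ t) :
    ((Finset.univ.filter fun f => t < X f).card : ℝ) * t ^ 2
      ≤ ∑ f : V → Bool, X f ^ 2 := by
  calc ((Finset.univ.filter fun f => t < X f).card : ℝ) * t ^ 2
      = ∑ _f ∈ Finset.univ.filter fun f => t < X f, t ^ 2 := by
        rw [Finset.sum_const, nsmul_eq_mul]
    _ ≤ ∑ f ∈ Finset.univ.filter fun f => t < X f, X f ^ 2 := by
        apply Finset.sum_le_sum
        intro f hf
        rw [Finset.mem_filter] at hf
        exact pow_le_pow_left₀ ht hf.2.le 2
    _ ≤ ∑ f : V → Bool, X f ^ 2 :=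
        Finset.sum_le_sum_of_subset_of_nonneg (Finset.filter_subset _ _)
          (fun f _ _ => sq_nonneg _)

lemma degSum_add_degSum' {V : Type*} [Fintype V] (G : SimpleGraph V) (f : V → Bool) :
    degSum G f + degSum' G f = 2 * G.edgeFinset.card := by
  unfold degSum degSum'
  rw [← G.sum_degrees_eq_twice_card_edges]
  have h : (Finset.univ.filter fun v => f v = false)
      = Finset.univ.filter fun v => ¬(f v = true) := by
    apply Finset.filter_congr
    intro v _
    simp
  rw [h]
  exact Finset.sum_filter_add_sum_filter_not _ _ _

/-- For a finite simple graph with `m ≥ 1` edges and maximum degree at most `Δ ≥ 1`,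
with probability at least `1/4` a uniformly random partition `V = V₁ ⊎ V₂` (modeled by a
uniformly random `f : V → Bool`) simultaneously satisfies `|E[V₁, V₂]| ≤ m/2 + √m`,
`Σ_{v ∈ V₁} deg(v) ≤ m + 2√(m·Δ)` and `Σ_{v ∈ V₂} deg(v) ≤ m + 2√(m·Δ)`. -/
theorem random_partition_good_whp {V : Type*} [Fintype V] (G : SimpleGraph V)
    (m Δ : ℕ) (hm : m = G.edgeFinset.card) (hm1 : 1 ≤ m) (hΔ1 : 1 ≤ Δ)
    (hΔ : ∀ v : V, G.degree v ≤ Δ) :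
    (1 : ℝ) / 4 ≤
      ((Finset.univ.filter fun f : V → Bool =>
          (cutOf G f : ℝ) ≤ (m : ℝ) / 2 + Real.sqrt m ∧
          (degSum G f : ℝ) ≤ (m : ℝ) + 2 * Real.sqrt ((m : ℝ) * (Δ : ℝ)) ∧
          (degSum' G f : ℝ) ≤ (m : ℝ) + 2 * Real.sqrt ((m : ℝ) * (Δ : ℝ))).card : ℝ)
        / 2 ^ Fintype.card V := by
  set N : ℝ := (Fintype.card (V → Bool) : ℝ) with hNdef
  have hN : N = 2 ^ Fintype.card V := by
    rw [hNdef, Fintype.card_fun, Fintype.card_bool]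
    push_cast
    ring
  have hmpos : (0 : ℝ) < m := by exact_mod_cast hm1
  have hΔpos : (0 : ℝ) < Δ := by exact_mod_cast hΔ1
  have hcard : (G.edgeFinset.card : ℝ) = (m : ℝ) := by rw [hm]
  -- bad sets
  set A := Finset.univ.filter fun f : V → Bool =>
    Real.sqrt m < (cutOf G f : ℝ) - (m : ℝ) / 2 with hA
  set B := Finset.univ.filter fun f : V → Bool =>
    2 * Real.sqrt ((m : ℝ) * (Δ : ℝ)) < (degSum G f : ℝ) - (m : ℝ) with hB
  set B' := Finset.univ.filter fun f : V → Bool =>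
    2 * Real.sqrt ((m : ℝ) * (Δ : ℝ)) < (m : ℝ) - (degSum G f : ℝ) with hB'
  -- bound on A
  have hAcard : (A.card : ℝ) ≤ N / 4 := by
    have h1 := card_filter_sq_le (fun f => (cutOf G f : ℝ) - (m : ℝ) / 2)
      (Real.sqrt m) (Real.sqrt_nonneg _)
    rw [Real.sq_sqrt hmpos.le] at h1
    have h2 : ∑ f : V → Bool, ((cutOf G f : ℝ) - (m : ℝ) / 2) ^ 2
        = N * (m : ℝ) / 4 := by
      rw [← hcard]
      exact cut_second_moment G
    rw [h2] at h1
    nlinarith [h1]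
  -- second moment of degrees
  have hdeg2 : ∑ f : V → Bool, ((degSum G f : ℝ) - (m : ℝ)) ^ 2
      ≤ N * (m : ℝ) * (Δ : ℝ) / 2 := by
    have h2 : ∑ f : V → Bool, ((degSum G f : ℝ) - (m : ℝ)) ^ 2
        = N / 4 * ∑ v : V, (G.degree v : ℝ) ^ 2 := by
      rw [← hcard]
      exact deg_second_moment G
    have h3 : ∑ v : V, (G.degree v : ℝ) ^ 2 ≤ 2 * (m : ℝ) * (Δ : ℝ) := by
      have h4 : ∀ v : V, (G.degree v : ℝ) ^ 2 ≤ (Δ : ℝ) * (G.degree v : ℝ) := by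
        intro v
        have h5 : (G.degree v : ℝ) ≤ (Δ : ℝ) := by exact_mod_cast hΔ v
        nlinarith [Nat.cast_nonneg (α := ℝ) (G.degree v)]
      calc ∑ v : V, (G.degree v : ℝ) ^ 2
          ≤ ∑ v : V, (Δ : ℝ) * (G.degree v : ℝ) :=
            Finset.sum_le_sum fun v _ => h4 v
        _ = (Δ : ℝ) * ∑ v : V, (G.degree v : ℝ) := by rw [Finset.mul_sum]
        _ = 2 * (m : ℝ) * (Δ : ℝ) := by
            have := G.sum_degrees_eq_twice_card_edges
            have h6 : ∑ v : V, (G.degree v : ℝ) = 2 * (G.edgeFinset.card : ℝ) := by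
              exact_mod_cast congrArg (Nat.cast : ℕ → ℝ) this
            rw [h6, hcard]; ring
    rw [h2]
    have hN0 : (0 : ℝ) ≤ N := Nat.cast_nonneg _
    nlinarith [h3, hN0]
  have hsq : (2 * Real.sqrt ((m : ℝ) * (Δ : ℝ))) ^ 2 = 4 * ((m : ℝ) * (Δ : ℝ)) := by
    rw [mul_pow, Real.sq_sqrt (by positivity)]
    ring
  -- bound on B
  have hmΔ : (0 : ℝ) < (m : ℝ) * (Δ : ℝ) := by positivity
  have hBcard : (B.card : ℝ) ≤ N / 8 := by
    have h1 : (B.card : ℝ) * (2 * Real.sqrt ((m : ℝ) * (Δ : ℝ))) ^ 2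
        ≤ ∑ f : V → Bool, ((degSum G f : ℝ) - (m : ℝ)) ^ 2 :=
      card_filter_sq_le _ _ (by positivity)
    rw [hsq] at h1
    have h7 := le_trans h1 hdeg2
    nlinarith [h7, hmΔ]
  -- bound on B'
  have hB'card : (B'.card : ℝ) ≤ N / 8 := by
    have h1 : (B'.card : ℝ) * (2 * Real.sqrt ((m : ℝ) * (Δ : ℝ))) ^ 2
        ≤ ∑ f : V → Bool, ((m : ℝ) - (degSum G f : ℝ)) ^ 2 :=
      card_filter_sq_le _ _ (by positivity)
    rw [hsq] at h1
    have h2 : ∑ f : V → Bool, ((m : ℝ) - (degSum G f : ℝ)) ^ 2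
        = ∑ f : V → Bool, ((degSum G f : ℝ) - (m : ℝ)) ^ 2 := by
      apply Finset.sum_congr rfl
      intro f _
      ring
    rw [h2] at h1
    have h7 := le_trans h1 hdeg2
    nlinarith [h7, hmΔ]
  -- the bad set is contained in A ∪ B ∪ B'
  set p : (V → Bool) → Prop := fun f =>
    (cutOf G f : ℝ) ≤ (m : ℝ) / 2 + Real.sqrt m ∧
    (degSum G f : ℝ) ≤ (m : ℝ) + 2 * Real.sqrt ((m : ℝ) * (Δ : ℝ)) ∧
    (degSum' G f : ℝ) ≤ (m : ℝ) + 2 * Real.sqrt ((m : ℝ) * (Δ : ℝ)) with hp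
  have hsubset : (Finset.univ.filter fun f => ¬ p f) ⊆ A ∪ B ∪ B' := by
    intro f hf
    simp only [Finset.mem_filter, Finset.mem_univ, true_and, hp] at hf
    push_neg at hf
    simp only [Finset.mem_union, hA, hB, hB', Finset.mem_filter, Finset.mem_univ,
      true_and]
    by_cases h1 : (cutOf G f : ℝ) ≤ (m : ℝ) / 2 + Real.sqrt m
    · by_cases h2 : (degSum G f : ℝ) ≤ (m : ℝ) + 2 * Real.sqrt ((m : ℝ) * (Δ : ℝ))
      · right
        have h3 := hf h1 h2
        have h4 : (degSum G f : ℝ) + (degSum' G f : ℝ) = 2 * (m : ℝ) := by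
          have := degSum_add_degSum' G f
          have h5 : ((degSum G f + degSum' G f : ℕ) : ℝ)
              = ((2 * G.edgeFinset.card : ℕ) : ℝ) := by rw [this]
          push_cast at h5
          rw [hcard] at h5
          linarith [h5]
        linarith [h3, h4]
      · left; right; linarith [not_le.mp h2]
    · left; left; linarith [not_le.mp h1]
  -- conclude
  have hgood : ((Finset.univ.filter p).card : ℝ) ≥ N / 2 := by
    have hsplit : (Finset.univ.filter p).card
        + (Finset.univ.filter fun f => ¬ p f).card = Fintype.card (V → Bool) := by
      rw [← Finset.card_univ]
      exact Finset.card_filter_add_card_filter_not p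
    have hbad : ((Finset.univ.filter fun f => ¬ p f).card : ℝ) ≤ N / 2 := by
      have h1 : (Finset.univ.filter fun f => ¬ p f).card ≤ (A ∪ B ∪ B').card :=
        Finset.card_le_card hsubset
      have h2 : (A ∪ B ∪ B').card ≤ A.card + B.card + B'.card :=
        le_trans (Finset.card_union_le _ _)
          (by linarith [Finset.card_union_le A B])
      have h3 : ((Finset.univ.filter fun f => ¬ p f).card : ℝ)
          ≤ (A.card : ℝ) + (B.card : ℝ) + (B'.card : ℝ) := by
        exact_mod_cast le_trans h1 h2
      linarith [hAcard, hBcard, hB'card]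
    have h4 : ((Finset.univ.filter p).card : ℝ)
        + ((Finset.univ.filter fun f => ¬ p f).card : ℝ) = N := by
      rw [hNdef]
      exact_mod_cast hsplit
    linarith
  rw [ge_iff_le] at hgood
  rw [le_div_iff₀ (by positivity)]
  calc (1 : ℝ) / 4 * 2 ^ Fintype.card V ≤ N / 2 := by
        rw [hN]
        have h := pow_pos (show (0:ℝ) < 2 by norm_num) (Fintype.card V)
        linarith
    _ ≤ _ := hgood
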